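/- Let δ ∈ (0,1) and take d = 2 (cubic polynomials). Then the polynomial q_{2,δ} maximizes the derivative at the origin over the class P_{2,δ}: for every p ∈ P_{2,δ}, q'_{2,δ}(0) ≥ p'(0). -/

import Mathlib

/-- `oddPoly n α` is the odd polynomial `α 0 * x + α 1 * x^3 + ⋯ + α (n-1) * x^(2n-1)`.
The functions of this form are exactly the elements of the space `L_n` of odd
polynomials of degree at most `2n-1`. -/
noncomputable def oddPoly (n : ℕ) (α : ℕ → ℝ) : ℝ → ℝ :=
  fun x => ∑ i ∈ Finset.range n, α i * x ^ (2 * i + 1)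

/-- The uniform (Chebyshev) distance `‖f − g‖_{C[a,b]} = sup_{x ∈ [a,b]} |f x − g x|`. -/
noncomputable def unifErr (a b : ℝ) (f g : ℝ → ℝ) : ℝ :=
  sSup ((fun x => |f x - g x|) '' Set.Icc a b)

/-- `epsVal n a b = ε(n,a,b)`, the least possible uniform deviation of an element of
`L_n` from the constant function `1` on `[a,b]`. -/
noncomputable def epsVal (n : ℕ) (a b : ℝ) : ℝ :=
  sInf (Set.range fun α : ℕ → ℝ => unifErr a b (fun _ => (1:ℝ)) (oddPoly n α))

/-- The class `𝒫_{d,δ}`: odd polynomials `p` of degree `2d−1` for which there exists a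
witness `a ∈ (0, 1−δ)` with `p(a) = 1−δ`, `p([a, 1+δ]) ⊆ [1−δ, 1+δ]`, and
`p([0,a]) ⊆ [0, 1−δ]`. -/
def PClass (d : ℕ) (δ : ℝ) (p : ℝ → ℝ) : Prop :=
  (∃ α : ℕ → ℝ, p = oddPoly d α) ∧
  ∃ a ∈ Set.Ioo (0:ℝ) (1 - δ), p a = 1 - δ ∧
    (∀ x ∈ Set.Icc a (1 + δ), p x ∈ Set.Icc (1 - δ) (1 + δ)) ∧
    (∀ x ∈ Set.Icc (0:ℝ) a, p x ∈ Set.Icc (0:ℝ) (1 - δ))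

/-!
Write `q = oddPoly 2 α` and `b = 1 + δ`. Optimality gives `|1 - q| ≤ δ` on `[a, b]`, and forbids
any odd cubic `g` that is positive where `q = 1 - δ` and negative where `q = 1 + δ`, since then
`q + ε g` would be a better approximation. Testing `g = ±x` shows that `q` takes both values
`1 ± δ`; testing `g = c²x - x³` shows that `q b = 1 - δ`: otherwise every point with `q = 1 - δ`
lies left of every point with `q = 1 + δ`, because an odd cubic that is positive and falling on
`(0, ∞)` is concave there and cannot come back up.

For `p ∈ 𝒫_{2,δ}`, the odd cubic `p - q` is then `≤ 0` at a point `v < b` with `q v = 1 + δ`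
(as `p ≤ 1 + δ` on `[0, b]`) and `≥ 0` at `b`. An odd cubic `c x + d x³` that changes sign
this way on `(0, ∞)` has `c ≤ 0`, which is `p'(0) ≤ q'(0)`.
-/

open Set

lemma oddPoly_two_apply (β : ℕ → ℝ) (x : ℝ) : oddPoly 2 β x = β 0 * x + β 1 * x ^ 3 := by
  simp [oddPoly, Finset.sum_range_succ]

lemma continuous_oddPoly (n : ℕ) (β : ℕ → ℝ) : Continuous (oddPoly n β) := by
  unfold oddPoly; fun_prop

lemma oddPoly_add_smul (n : ℕ) (α γ : ℕ → ℝ) (ε : ℝ) :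
    oddPoly n (α + ε • γ) = fun x => oddPoly n α x + ε * oddPoly n γ x := by
  ext x
  simp only [oddPoly, Pi.add_apply, Pi.smul_apply, smul_eq_mul, add_mul, Finset.sum_add_distrib,
    Finset.mul_sum, mul_assoc]

lemma hasDerivAt_oddPoly_zero {n : ℕ} (hn : 0 < n) (β : ℕ → ℝ) :
    HasDerivAt (oddPoly n β) (β 0) 0 := by
  have h := HasDerivAt.fun_sum (u := Finset.range n)
    fun i _ => (hasDerivAt_pow (2 * i + 1) (0 : ℝ)).const_mul (β i)
  rw [Finset.sum_eq_single_of_mem 0 (Finset.mem_range.2 hn) (by simp +contextual)] at h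
  simp only [mul_zero, zero_add, Nat.cast_one, tsub_self, pow_zero, mul_one] at h
  exact h

lemma deriv_oddPoly_zero {n : ℕ} (hn : 0 < n) (β : ℕ → ℝ) : deriv (oddPoly n β) 0 = β 0 :=
  (hasDerivAt_oddPoly_zero hn β).deriv

lemma abs_sub_le_unifErr {a b x : ℝ} {f g : ℝ → ℝ} (hf : Continuous f) (hg : Continuous g)
    (hx : x ∈ Icc a b) : |f x - g x| ≤ unifErr a b f g :=
  le_csSup (isCompact_Icc.bddAbove_image (hf.sub hg).abs.continuousOn) (mem_image_of_mem _ hx)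

lemma unifErr_lt {a b δ : ℝ} {f g : ℝ → ℝ} (hab : a ≤ b) (hf : Continuous f) (hg : Continuous g)
    (h : ∀ x ∈ Icc a b, |f x - g x| < δ) : unifErr a b f g < δ :=
  (isCompact_Icc.sSup_lt_iff_of_continuous (nonempty_Icc.2 hab)
    (hf.sub hg).abs.continuousOn δ).2 h

lemma unifErr_nonneg (a b : ℝ) (f g : ℝ → ℝ) : 0 ≤ unifErr a b f g :=
  Real.sSup_nonneg (by rintro _ ⟨x, _, rfl⟩; positivity)

lemma epsVal_le_unifErr (n : ℕ) (a b : ℝ) (β : ℕ → ℝ) :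
    epsVal n a b ≤ unifErr a b (fun _ => 1) (oddPoly n β) :=
  csInf_le ⟨0, by rintro _ ⟨γ, rfl⟩; exact unifErr_nonneg _ _ _ _⟩ ⟨β, rfl⟩

lemma unifErr_le_epsVal {n : ℕ} {a b : ℝ} {α : ℕ → ℝ}
    (hbest : ∀ β, unifErr a b (fun _ => 1) (oddPoly n α) ≤ unifErr a b (fun _ => 1) (oddPoly n β)) :
    unifErr a b (fun _ => 1) (oddPoly n α) ≤ epsVal n a b :=
  le_csInf (range_nonempty _) (by rintro _ ⟨β, rfl⟩; exact hbest β)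

lemma linear_coeff_nonpos_of_cubic_sign_change {c d x₁ x₂ : ℝ} (h₁ : 0 < x₁) (h₁₂ : x₁ < x₂)
    (hf₁ : c * x₁ + d * x₁ ^ 3 ≤ 0) (hf₂ : 0 ≤ c * x₂ + d * x₂ ^ 3) : c ≤ 0 := by
  have hx₂ : 0 < x₂ := h₁.trans h₁₂
  have hslope₁ : c + d * x₁ ^ 2 ≤ 0 := by nlinarith
  have hslope₂ : 0 ≤ c + d * x₂ ^ 2 := by nlinarith
  have hd : 0 ≤ d := by nlinarith [mul_pos (add_pos h₁ hx₂) (sub_pos.2 h₁₂)]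
  nlinarith [sq_nonneg x₁]

lemma cubic_lt_of_fall {c d v u b : ℝ} (hv : 0 < v) (hvu : v < u) (hub : u < b)
    (hfv : 0 < c * v + d * v ^ 3) (hfall : c * u + d * u ^ 3 < c * v + d * v ^ 3) :
    c * b + d * b ^ 3 < c * u + d * u ^ 3 := by
  have hd : d < 0 := by
    by_contra! hd
    have hgv : 0 < c + d * v ^ 2 := by nlinarith
    have hgu : c + d * v ^ 2 ≤ c + d * u ^ 2 := by
      have : v ^ 2 ≤ u ^ 2 := pow_le_pow_left₀ hv.le hvu.le 2
      nlinarith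
    nlinarith [mul_le_mul_of_nonneg_left hgu (hv.trans hvu).le, mul_lt_mul_of_pos_right hvu hgv]
  -- the second divided difference of `c x + d x³` at `v, u, b` is `d (v + u + b)`
  have hdiff : (c * b + d * b ^ 3 - (c * u + d * u ^ 3)) * (u - v)
      - (c * u + d * u ^ 3 - (c * v + d * v ^ 3)) * (b - u)
      = d * (b - u) * (u - v) * (b - v) * (v + u + b) := by ring
  have hneg : d * (b - u) * (u - v) * (b - v) * (v + u + b) < 0 :=
    mul_neg_of_neg_of_pos (mul_neg_of_neg_of_pos (mul_neg_of_neg_of_pos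
      (mul_neg_of_neg_of_pos hd (by linarith)) (by linarith)) (by linarith)) (by linarith)
  nlinarith [mul_pos (sub_pos.2 hvu) (sub_pos.2 hub)]

lemma IsCompact.exists_forall_le_of_forall_lt {X : Type*} [TopologicalSpace X] {K : Set X}
    (hK : IsCompact K) {f : X → ℝ} (hf : ContinuousOn f K) {δ : ℝ} (h : ∀ x ∈ K, f x < δ) :
    ∃ m < δ, ∀ x ∈ K, f x ≤ m := by
  rcases K.eq_empty_or_nonempty with rfl | hne
  · exact ⟨δ - 1, by linarith, by simp⟩
  · obtain ⟨y, hy, hmax⟩ := hK.exists_isMaxOn hne hf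
    exact ⟨f y, h y hy, hmax⟩

/-- The easy half of Kolmogorov's criterion for best uniform approximation. -/
lemma IsCompact.exists_pos_abs_sub_mul_lt {X : Type*} [TopologicalSpace X] {K : Set X}
    (hK : IsCompact K) {e g : X → ℝ} (he : Continuous e) (hg : Continuous g) {δ : ℝ}
    (hle : ∀ x ∈ K, |e x| ≤ δ) (hpos : ∀ x ∈ K, e x = δ → 0 < g x)
    (hneg : ∀ x ∈ K, e x = -δ → g x < 0) :
    ∃ ε > 0, ∀ x ∈ K, |e x - ε * g x| < δ := by
  have hK₁ : IsCompact (K ∩ {x | g x ≤ 0}) := hK.inter_right (isClosed_le hg continuous_const)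
  have hK₂ : IsCompact (K ∩ {x | 0 ≤ g x}) := hK.inter_right (isClosed_le continuous_const hg)
  obtain ⟨m₁, hm₁, hle₁⟩ := hK₁.exists_forall_le_of_forall_lt he.continuousOn
    fun x ⟨hx, hgx⟩ => lt_of_le_of_ne (abs_le.1 (hle x hx)).2 fun h => (hpos x hx h).not_ge hgx
  obtain ⟨m₂, hm₂, hle₂⟩ := hK₂.exists_forall_le_of_forall_lt (f := fun x => -e x)
    he.neg.continuousOn fun x ⟨hx, hgx⟩ => lt_of_le_of_ne (neg_le.1 (abs_le.1 (hle x hx)).1)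
      fun h => (hneg x hx (neg_eq_iff_eq_neg.1 h)).not_ge hgx
  obtain ⟨C, hC⟩ := hK.exists_bound_of_continuousOn hg.continuousOn
  set ε := min (δ - m₁) (δ - m₂) / (|C| + 1)
  have hε : 0 < ε := div_pos (lt_min (by linarith) (by linarith)) (by positivity)
  have hεg (x : X) (hx : x ∈ K) : ε * |g x| < min (δ - m₁) (δ - m₂) :=
    calc ε * |g x| ≤ ε * |C| := mul_le_mul_of_nonneg_left ((hC x hx).trans (le_abs_self C)) hε.le
      _ < ε * (|C| + 1) := by gcongr; linarith
      _ = min (δ - m₁) (δ - m₂) := div_mul_cancel₀ _ (by positivity)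
  refine ⟨ε, hε, fun x hx => abs_lt.2 ⟨?_, ?_⟩⟩
  · rcases le_or_gt 0 (g x) with hgx | hgx
    · have hεgx := (hεg x hx).trans_le (min_le_right _ _)
      rw [abs_of_nonneg hgx] at hεgx
      linarith [hle₂ x ⟨hx, hgx⟩]
    · nlinarith [(abs_le.1 (hle x hx)).1]
  · rcases le_or_gt (g x) 0 with hgx | hgx
    · have hεgx := (hεg x hx).trans_le (min_le_left _ _)
      rw [abs_of_nonpos hgx] at hεgx
      linarith [hle₁ x ⟨hx, hgx⟩]
    · nlinarith [(abs_le.1 (hle x hx)).2]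

lemma oddPoly_two_ite (c d x : ℝ) :
    oddPoly 2 (fun i => if i = 0 then c else d) x = c * x + d * x ^ 3 := by
  simp [oddPoly_two_apply]

section BestApproximation

variable {a b δ : ℝ} {α : ℕ → ℝ}

lemma false_of_improving_direction (hα : ∀ x ∈ Icc a b, |1 - oddPoly 2 α x| ≤ δ)
    (hopt : ∀ β, δ ≤ unifErr a b (fun _ => 1) (oddPoly 2 β)) (hab : a ≤ b) (γ : ℕ → ℝ)
    (hpos : ∀ x ∈ Icc a b, oddPoly 2 α x = 1 - δ → 0 < oddPoly 2 γ x)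
    (hneg : ∀ x ∈ Icc a b, oddPoly 2 α x = 1 + δ → oddPoly 2 γ x < 0) : False := by
  obtain ⟨ε, -, hε⟩ := isCompact_Icc.exists_pos_abs_sub_mul_lt (e := fun x => 1 - oddPoly 2 α x)
    (continuous_const.sub (continuous_oddPoly 2 α)) (continuous_oddPoly 2 γ) hα
    (fun x hx h => hpos x hx (by linarith)) (fun x hx h => hneg x hx (by linarith))
  have hlt := unifErr_lt hab continuous_const (continuous_oddPoly 2 (α + ε • γ))
    fun x hx => by simpa [oddPoly_add_smul, sub_add_eq_sub_sub] using hε x hx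
  exact (hopt _).not_gt hlt

lemma exists_oddPoly_two_eq_one_add (hα : ∀ x ∈ Icc a b, |1 - oddPoly 2 α x| ≤ δ)
    (hopt : ∀ β, δ ≤ unifErr a b (fun _ => 1) (oddPoly 2 β)) (ha : 0 < a) (hab : a ≤ b) :
    ∃ v ∈ Icc a b, oddPoly 2 α v = 1 + δ := by
  by_contra! h
  refine false_of_improving_direction hα hopt hab (fun i => if i = 0 then 1 else 0)
    (fun x hx _ => ?_) (fun x hx hx' => absurd hx' (h x hx))
  rw [oddPoly_two_ite]; linarith [hx.1]

lemma exists_oddPoly_two_eq_one_sub (hα : ∀ x ∈ Icc a b, |1 - oddPoly 2 α x| ≤ δ)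
    (hopt : ∀ β, δ ≤ unifErr a b (fun _ => 1) (oddPoly 2 β)) (ha : 0 < a) (hab : a ≤ b) :
    ∃ u ∈ Icc a b, oddPoly 2 α u = 1 - δ := by
  by_contra! h
  refine false_of_improving_direction hα hopt hab (fun i => if i = 0 then -1 else 0)
    (fun x hx hx' => absurd hx' (h x hx)) (fun x hx _ => ?_)
  rw [oddPoly_two_ite]; linarith [hx.1]

lemma lt_of_oddPoly_two_eq_one_sub_of_eq_one_add (hα : ∀ x ∈ Icc a b, |1 - oddPoly 2 α x| ≤ δ)
    (hδ : 0 < δ) (ha : 0 < a) (hb : oddPoly 2 α b ≠ 1 - δ) {u v : ℝ} (hu : u ∈ Icc a b)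
    (hv : v ∈ Icc a b) (hqu : oddPoly 2 α u = 1 - δ) (hqv : oddPoly 2 α v = 1 + δ) : u < v := by
  refine lt_of_le_of_ne (not_lt.1 fun hvu => ?_) fun huv => by subst huv; linarith
  have hub : u < b := lt_of_le_of_ne hu.2 fun hub => hb (hub ▸ hqu)
  have hfall := cubic_lt_of_fall (c := α 0) (d := α 1) (ha.trans_le hv.1) hvu hub
  simp only [← oddPoly_two_apply, hqu, hqv] at hfall
  have hqb := (abs_le.1 (hα b ⟨hu.1.trans hu.2, le_rfl⟩)).2
  linarith [hfall (by linarith) (by linarith)]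

lemma oddPoly_two_right_eq_one_sub (hα : ∀ x ∈ Icc a b, |1 - oddPoly 2 α x| ≤ δ)
    (hopt : ∀ β, δ ≤ unifErr a b (fun _ => 1) (oddPoly 2 β)) (hδ : 0 < δ) (ha : 0 < a)
    (hab : a ≤ b) : oddPoly 2 α b = 1 - δ := by
  by_contra hb
  have hclosed (y : ℝ) : IsCompact (Icc a b ∩ oddPoly 2 α ⁻¹' {y}) :=
    isCompact_Icc.inter_right (isClosed_singleton.preimage (continuous_oddPoly 2 α))
  obtain ⟨u, ⟨hu, hqu⟩, hu_max⟩ := (hclosed (1 - δ)).exists_isGreatest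
    (exists_oddPoly_two_eq_one_sub hα hopt ha hab)
  obtain ⟨v, ⟨hv, hqv⟩, hv_min⟩ := (hclosed (1 + δ)).exists_isLeast
    (exists_oddPoly_two_eq_one_add hα hopt ha hab)
  have huv := lt_of_oddPoly_two_eq_one_sub_of_eq_one_add hα hδ ha hb hu hv hqu hqv
  obtain ⟨c, huc, hcv⟩ := exists_between huv
  have hc : 0 < c := by linarith [hu.1]
  -- `c²x - x³ = x (c - x) (c + x)` changes sign at `c`, between the two sets of extremal points
  refine false_of_improving_direction hα hopt hab (fun i => if i = 0 then c ^ 2 else -1)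
    (fun x hx hqx => ?_) (fun x hx hqx => ?_) <;> rw [oddPoly_two_ite]
  · have hxc : x < c := (hu_max ⟨hx, hqx⟩).trans_lt huc
    nlinarith [mul_pos (ha.trans_le hx.1) (mul_pos (sub_pos.2 hxc) (add_pos hc (ha.trans_le hx.1)))]
  · have hcx : c < x := hcv.trans_le (hv_min ⟨hx, hqx⟩)
    nlinarith [mul_pos (ha.trans_le hx.1) (mul_pos (sub_pos.2 hcx) (add_pos hc (ha.trans_le hx.1)))]

end BestApproximation

lemma PClass.le_one_add {d : ℕ} {δ : ℝ} {p : ℝ → ℝ} (hp : PClass d δ p) (hδ : 0 ≤ δ) {x : ℝ}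
    (hx : x ∈ Icc 0 (1 + δ)) : p x ≤ 1 + δ := by
  obtain ⟨-, a, -, -, hupper, hlower⟩ := hp
  rcases le_total x a with hxa | hax
  · linarith [(hlower x ⟨hx.1, hxa⟩).2]
  · exact (hupper x ⟨hax, hx.2⟩).2

lemma PClass.one_sub_le_apply_one_add {d : ℕ} {δ : ℝ} {p : ℝ → ℝ} (hp : PClass d δ p)
    (hδ : 0 ≤ δ) : 1 - δ ≤ p (1 + δ) := by
  obtain ⟨-, a, ha, -, hupper, -⟩ := hp
  exact (hupper _ ⟨by linarith [ha.2], le_rfl⟩).1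

/-- For `d = 2` (cubic polynomials), `q_{2,δ}` maximizes the
derivative at the origin over the class `𝒫_{2,δ}`: `q'_{2,δ}(0) ≥ p'(0)` for every
`p ∈ 𝒫_{2,δ}`. -/
theorem q_maximizes_derivative_at_zero (δ : ℝ) (hδ : δ ∈ Set.Ioo (0:ℝ) 1)
    (a : ℝ) (ha : a ∈ Set.Ioo (0:ℝ) (1 + δ)) (haeps : epsVal 2 a (1 + δ) = δ)
    (α : ℕ → ℝ)
    (hbest : ∀ β : ℕ → ℝ,
      unifErr a (1 + δ) (fun _ => (1:ℝ)) (oddPoly 2 α)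
        ≤ unifErr a (1 + δ) (fun _ => (1:ℝ)) (oddPoly 2 β)) :
    ∀ p : ℝ → ℝ, PClass 2 δ p → deriv p 0 ≤ deriv (oddPoly 2 α) 0 := by
  intro p hp
  obtain ⟨hδ, -⟩ := hδ
  obtain ⟨ha, hab⟩ := ha
  have hα (x : ℝ) (hx : x ∈ Icc a (1 + δ)) : |1 - oddPoly 2 α x| ≤ δ :=
    (abs_sub_le_unifErr continuous_const (continuous_oddPoly 2 α) hx).trans
      ((unifErr_le_epsVal hbest).trans haeps.le)
  have hopt (β : ℕ → ℝ) : δ ≤ unifErr a (1 + δ) (fun _ => 1) (oddPoly 2 β) :=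
    haeps.ge.trans (epsVal_le_unifErr 2 a (1 + δ) β)
  obtain ⟨v, hv, hqv⟩ := exists_oddPoly_two_eq_one_add hα hopt ha hab.le
  have hqb := oddPoly_two_right_eq_one_sub hα hopt hδ ha hab.le
  have hvb : v < 1 + δ := lt_of_le_of_ne hv.2 fun h => by rw [h] at hqv; linarith
  have hpv := hp.le_one_add hδ.le ⟨ha.le.trans hv.1, hv.2⟩
  have hpb := hp.one_sub_le_apply_one_add hδ.le
  obtain ⟨⟨β, rfl⟩, -⟩ := hp
  rw [deriv_oddPoly_zero two_pos, deriv_oddPoly_zero two_pos, ← sub_nonpos]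
  rw [oddPoly_two_apply] at hqv hqb hpv hpb
  refine linear_coeff_nonpos_of_cubic_sign_change (d := β 1 - α 1) (ha.trans_le hv.1) hvb ?_ ?_
  · linear_combination hpv - hqv
  · linear_combination hpb + hqb
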